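/- Let I ⊆ ℕ be nonempty, let x ∈ A_I and let n ∈ I. Then for every h ∈ [4/3^{n+1}, 4/3^n] one has δ_{A_I,x}(h) = 2·γ(x,h,A_I)/h ≥ 1/4. -/
import Mathlib


open Metric Filter Set

/-- γ(x,R,M): the supremum of radii r>0 of open balls contained in B(x,R) \ M
(equal to 0 if no such ball exists, by `Real.sSup_empty`). -/
noncomputable def porGamma {X : Type*} [MetricSpace X] (x : X) (R : ℝ) (M : Set X) : ℝ :=
  sSup {r : ℝ | 0 < r ∧ ∃ z : X, Metric.ball z r ⊆ Metric.ball x R \ M}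

/-- `M` is lower porous at `x`: liminf_{R→0+} 2γ(x,R,M)/R > 0. -/
def LowerPorousAt {X : Type*} [MetricSpace X] (M : Set X) (x : X) : Prop :=
  0 < Filter.liminf (fun R => 2 * porGamma x R M / R) (nhdsWithin 0 (Set.Ioi 0))

/-- `M` is (upper) porous at `x`: limsup_{R→0+} 2γ(x,R,M)/R > 0. -/
def UpperPorousAt {X : Type*} [MetricSpace X] (M : Set X) (x : X) : Prop :=
  0 < Filter.limsup (fun R => 2 * porGamma x R M / R) (nhdsWithin 0 (Set.Ioi 0))

/-- A set is lower porous if it is lower porous at each of its points. -/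
def LowerPorous {X : Type*} [MetricSpace X] (M : Set X) : Prop :=
  ∀ x ∈ M, LowerPorousAt M x

/-- A set is (upper) porous if it is porous at each of its points. -/
def UpperPorous {X : Type*} [MetricSpace X] (M : Set X) : Prop :=
  ∀ x ∈ M, UpperPorousAt M x

/-- A set is σ-lower porous if it is a countable union of lower porous sets. -/
def SigmaLowerPorous {X : Type*} [MetricSpace X] (A : Set X) : Prop :=
  ∃ f : ℕ → Set X, (∀ n, LowerPorous (f n)) ∧ A = ⋃ n, f n

/-- A set is σ-(upper) porous if it is a countable union of porous sets. -/
def SigmaUpperPorous {X : Type*} [MetricSpace X] (A : Set X) : Prop :=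
  ∃ f : ℕ → Set X, (∀ n, UpperPorous (f n)) ∧ A = ⋃ n, f n

/-- The open sets `D_n ⊆ (0,1)`; `D_0 = ∅` and for `n ≥ 1`,
`D_n = ⋃_{i=0}^{3^{n-1}-1} ((1+3i)/3^n, (2+3i)/3^n)`. -/
noncomputable def Dset : ℕ → Set ℝ
  | 0 => ∅
  | (n + 1) =>
      ⋃ i ∈ Finset.range (3 ^ n),
        Set.Ioo ((1 + 3 * (i : ℝ)) / 3 ^ (n + 1)) ((2 + 3 * (i : ℝ)) / 3 ^ (n + 1))

/-- `M_n = ∂D_n`, the boundary of `D_n` in `ℝ`. -/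
noncomputable def Mset (n : ℕ) : Set ℝ := frontier (Dset n)

/-- `D_I = ⋃_{n ∈ I} D_n`. -/
noncomputable def DsetI (I : Set ℕ) : Set ℝ := ⋃ n ∈ I, Dset n

/-- `M_I = ⋃_{n ∈ I} M_n`. -/
noncomputable def MsetI (I : Set ℕ) : Set ℝ := ⋃ n ∈ I, Mset n

/-- `A_I = [0,1] \ D_I`. -/
noncomputable def AsetI (I : Set ℕ) : Set ℝ := Set.Icc 0 1 \ DsetI I

lemma gap_lemma (I : Set ℕ) (x : ℝ) (hx : x ∈ AsetI I) (n : ℕ) (hn : n ∈ I) :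
    ∃ a : ℝ, (Set.Ioo a (a + 1 / 3 ^ n) ∩ AsetI I = ∅) ∧
      ((x ≤ a ∧ a ≤ x + 1 / 3 ^ n) ∨ (a + 1 / 3 ^ n ≤ x ∧ x ≤ a + 2 / 3 ^ n)) := by
  obtain ⟨⟨hx0, hx1⟩, hxD⟩ := hx
  have hout : ∀ a : ℝ, 1 ≤ a → Set.Ioo a (a + 1 / 3 ^ n) ∩ AsetI I = ∅ := by
    intro a ha
    apply Set.eq_empty_iff_forall_notMem.mpr
    rintro y ⟨⟨hy1, _⟩, ⟨_, hy2⟩, _⟩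
    linarith
  match n with
  | 0 =>
    exact ⟨1, hout 1 le_rfl, Or.inl ⟨hx1, by norm_num; linarith⟩⟩
  | (m + 1) =>
    set n := m + 1 with hndef
    set t : ℝ := 1 / 3 ^ n with htdef
    have ht : (0:ℝ) < t := by positivity
    have h3t : (3:ℝ) ^ n * t = 1 := by rw [htdef, mul_one_div, div_self (by positivity)]
    -- intervals of Dset n are contained in the complement of AsetI I
    have hDsub : ∀ j : ℕ, j < 3 ^ m →
        Set.Ioo (((3 * j : ℕ) + 1 : ℝ) * t) (((3 * j : ℕ) + 1 : ℝ) * t + t) ∩ AsetI I = ∅ ∧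
        Set.Ioo (((3 * j : ℕ) + 1 : ℝ) * t) (((3 * j : ℕ) + 1 : ℝ) * t + t) ⊆ Dset n := by
      intro j hj
      have hsub : Set.Ioo (((3 * j : ℕ) + 1 : ℝ) * t) (((3 * j : ℕ) + 1 : ℝ) * t + t) ⊆ Dset n := by
        intro y hy
        show y ∈ Dset (m + 1)
        have hD : Dset (m + 1) = ⋃ i ∈ Finset.range (3 ^ m),
            Set.Ioo ((1 + 3 * (i : ℝ)) / 3 ^ (m + 1)) ((2 + 3 * (i : ℝ)) / 3 ^ (m + 1)) := rfl
        rw [hD]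
        simp only [Set.mem_iUnion, Finset.mem_range]
        refine ⟨j, hj, ?_⟩
        have e1 : (1 + 3 * (j : ℝ)) / 3 ^ (m + 1) = ((3 * j : ℕ) + 1 : ℝ) * t := by
          push_cast; rw [htdef, hndef]; ring
        have e2 : (2 + 3 * (j : ℝ)) / 3 ^ (m + 1) = ((3 * j : ℕ) + 1 : ℝ) * t + t := by
          push_cast; rw [htdef, hndef]; ring
        rw [e1, e2]; exact hy
      refine ⟨Set.eq_empty_iff_forall_notMem.mpr ?_, hsub⟩
      rintro y ⟨hy1, _, hy2⟩
      exact hy2 (Set.mem_biUnion hn (hsub hy1))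
    set k : ℕ := ⌊x * 3 ^ n⌋₊ with hkdef
    have hk1 : (k : ℝ) ≤ x * 3 ^ n := Nat.floor_le (by positivity)
    have hk2 : x * 3 ^ n < k + 1 := Nat.lt_floor_add_one _
    have hk3 : k ≤ 3 ^ n := by
      have : (k : ℝ) ≤ ((3 ^ n : ℕ) : ℝ) := by push_cast; nlinarith
      exact_mod_cast this
    have hxk : (k : ℝ) * t ≤ x := by nlinarith
    have hxk2 : x < ((k : ℝ) + 1) * t := by nlinarith
    have hx3n : x ∉ DsetI I := hxD
    rcases (show k % 3 = 0 ∨ k % 3 = 1 ∨ k % 3 = 2 by omega) with hm | hm | hm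
    · rcases eq_or_lt_of_le hk3 with hk4 | hk4
      · -- k = 3^n, so x = 1
        have hx1' : (1:ℝ) ≤ x := by
          have : ((3^n : ℕ) : ℝ) ≤ x * 3 ^ n := by rw [← hk4]; exact_mod_cast hk1
          push_cast at this; nlinarith
        exact ⟨1, hout 1 le_rfl, Or.inl ⟨hx1, by linarith⟩⟩
      · set j : ℕ := k / 3 with hjdef
        have hkj : k = 3 * j := by omega
        have hj : j < 3 ^ m := by
          have : 3 ^ n = 3 * 3 ^ m := by rw [hndef, pow_succ]; ring
          omega
        obtain ⟨hempty, _⟩ := hDsub j hj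
        refine ⟨((3 * j : ℕ) + 1 : ℝ) * t, hempty, Or.inl ⟨?_, ?_⟩⟩
        · have : ((3 * j : ℕ) : ℝ) = (k : ℝ) := by exact_mod_cast hkj.symm
          rw [this]; linarith
        · have : ((3 * j : ℕ) : ℝ) = (k : ℝ) := by exact_mod_cast hkj.symm
          rw [this]; nlinarith
    · have hk4 : k < 3 ^ n := by
        rcases eq_or_lt_of_le hk3 with h' | h'
        · exfalso; have : 3 ^ n % 3 = 0 := by
            rw [hndef, pow_succ]; omega
          omega
        · exact h'
      set j : ℕ := k / 3 with hjdef
      have hkj : k = 3 * j + 1 := by omega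
      have hj : j < 3 ^ m := by
        have : 3 ^ n = 3 * 3 ^ m := by rw [hndef, pow_succ]; ring
        omega
      obtain ⟨hempty, hsub⟩ := hDsub j hj
      have hcast : ((3 * j : ℕ) : ℝ) + 1 = (k : ℝ) := by push_cast [hkj]; ring
      -- x is not in the open interval, and k*t ≤ x < (k+1)*t, so x = k*t
      have hnotin : x ∉ Set.Ioo (((3 * j : ℕ) + 1 : ℝ) * t) (((3 * j : ℕ) + 1 : ℝ) * t + t) := by
        intro hmem
        exact hx3n (Set.mem_biUnion hn (hsub hmem))
      have hxle : x ≤ ((3 * j : ℕ) + 1 : ℝ) * t := by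
        by_contra hlt
        push_neg at hlt
        apply hnotin
        constructor
        · exact hlt
        · rw [hcast]; nlinarith
      refine ⟨((3 * j : ℕ) + 1 : ℝ) * t, hempty, Or.inl ⟨hxle, ?_⟩⟩
      rw [hcast]; linarith
    · have hk4 : k < 3 ^ n := by
        rcases eq_or_lt_of_le hk3 with h' | h'
        · exfalso; have : 3 ^ n % 3 = 0 := by
            rw [hndef, pow_succ]; omega
          omega
        · exact h'
      set j : ℕ := k / 3 with hjdef
      have hkj : k = 3 * j + 2 := by omega
      have hj : j < 3 ^ m := by
        have : 3 ^ n = 3 * 3 ^ m := by rw [hndef, pow_succ]; ring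
        omega
      obtain ⟨hempty, _⟩ := hDsub j hj
      have hcast : ((3 * j : ℕ) : ℝ) + 2 = (k : ℝ) := by push_cast [hkj]; ring
      refine ⟨((3 * j : ℕ) + 1 : ℝ) * t, hempty, Or.inr ⟨?_, ?_⟩⟩
      · have : (((3 * j : ℕ) + 1 : ℝ)) * t + t = (k:ℝ) * t := by rw [← hcast]; ring
        rw [htdef] at this ⊢
        rw [this]; exact hxk
      · have e : (((3 * j : ℕ) + 1 : ℝ)) * t + 2 * t = ((k:ℝ) + 1) * t := by rw [← hcast]; ring
        have : x ≤ ((3 * j : ℕ) + 1 : ℝ) * t + 2 * t := by rw [e]; linarith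
        calc x ≤ ((3 * j : ℕ) + 1 : ℝ) * t + 2 * t := this
          _ = ((3 * j : ℕ) + 1 : ℝ) * t + 2 / 3 ^ n := by rw [htdef]; ring

/-- For `x ∈ A_I`, `n ∈ I` and `h ∈ [4/3^{n+1}, 4/3^n]`, one has
`δ_{A_I,x}(h) = 2γ(x,h,A_I)/h ≥ 1/4`. -/
theorem delta_AsetI_ge_quarter (I : Set ℕ) (hI : I.Nonempty) (x : ℝ) (hx : x ∈ AsetI I)
    (n : ℕ) (hn : n ∈ I) (h : ℝ)
    (hh : h ∈ Set.Icc (4 / 3 ^ (n + 1) : ℝ) (4 / 3 ^ n)) :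
    (1 : ℝ) / 4 ≤ 2 * porGamma x h (AsetI I) / h := by
  obtain ⟨hh1, hh2⟩ := hh
  set t : ℝ := 1 / 3 ^ n with htdef
  have ht : (0:ℝ) < t := by positivity
  have htl : 4 / 3 * t ≤ h := by
    have : (4:ℝ) / 3 ^ (n + 1) = 4 / 3 * t := by rw [htdef, pow_succ]; ring
    linarith
  have hth : h ≤ 4 * t := by
    have : (4:ℝ) / 3 ^ n = 4 * t := by rw [htdef]; ring
    linarith
  have hpos : 0 < h := by linarith
  obtain ⟨a, hempty, hcase⟩ := gap_lemma I x hx n hn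
  rw [← htdef] at hempty hcase
  have hnmem : ∀ y : ℝ, y ∈ Set.Ioo a (a + t) → y ∉ AsetI I := by
    intro y hy hyA
    exact Set.eq_empty_iff_forall_notMem.mp hempty y ⟨hy, hyA⟩
  -- produce a ball of radius h/8
  have hmem : h / 8 ∈ {r : ℝ | 0 < r ∧ ∃ z : ℝ, Metric.ball z r ⊆ Metric.ball x h \ AsetI I} := by
    refine ⟨by linarith, ?_⟩
    rcases hcase with ⟨hc1, hc2⟩ | ⟨hc1, hc2⟩
    · refine ⟨a + h / 8, ?_⟩
      intro y hy
      rw [Real.ball_eq_Ioo] at hy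
      obtain ⟨hy1, hy2⟩ := hy
      have hy1' : a < y := by linarith
      have hy2' : y < a + h / 4 := by linarith
      constructor
      · rw [Real.ball_eq_Ioo]
        constructor <;> [linarith; linarith]
      · exact hnmem y ⟨hy1', by linarith⟩
    · have hc2' : x ≤ a + 2 * t := by
        have : (2:ℝ) / 3 ^ n = 2 * t := by rw [htdef]; ring
        linarith
      refine ⟨a + t - h / 8, ?_⟩
      intro y hy
      rw [Real.ball_eq_Ioo] at hy
      obtain ⟨hy1, hy2⟩ := hy
      have hy1' : a + t - h / 4 < y := by linarith
      have hy2' : y < a + t := by linarith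
      constructor
      · rw [Real.ball_eq_Ioo]
        have : a + t - h / 4 ≥ x - h := by linarith
        constructor <;> [linarith; linarith]
      · exact hnmem y ⟨by linarith, hy2'⟩
  have hbdd : BddAbove {r : ℝ | 0 < r ∧ ∃ z : ℝ, Metric.ball z r ⊆ Metric.ball x h \ AsetI I} := by
    refine ⟨2 * h, ?_⟩
    rintro r ⟨hr, z, hz⟩
    have h1 : z + r / 2 ∈ Metric.ball x h := by
      have : z + r / 2 ∈ Metric.ball z r := by
        rw [Real.ball_eq_Ioo]; constructor <;> linarith
      exact (hz this).1
    have h2 : z - r / 2 ∈ Metric.ball x h := by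
      have : z - r / 2 ∈ Metric.ball z r := by
        rw [Real.ball_eq_Ioo]; constructor <;> linarith
      exact (hz this).1
    rw [Real.ball_eq_Ioo] at h1 h2
    obtain ⟨_, h1b⟩ := h1
    obtain ⟨h2a, _⟩ := h2
    linarith
  have hgamma : h / 8 ≤ porGamma x h (AsetI I) := le_csSup hbdd hmem
  rw [div_le_div_iff₀ (by norm_num) hpos]
  unfold porGamma at hgamma ⊢
  linarith
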